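/- Fix p ≥ 2 and let D be a distribution on ℝᵈ such that for some ε > 0 and δ ∈ (0,1], every v with ‖v‖_p ≤ ε satisfies tv(D, D+v) ≤ δ. Let η ~ D and let σ be a permutation of {1,…,d} ordering coordinates by decreasing variance: E[η_{σ(1)}²] ≥ … ≥ E[η_{σ(d)}²]. Then for every i ∈ {1,…,d}, E[η_{σ(i)}²] ≥ (ε²(d−i+1)^{1−2/p}/800)·(1−δ)/δ². -/

import Mathlib

/-!
If a measurable `f` grows by `s ≥ 0` along `v` and `R = ns/2`, then both `{f ≥ R}` and the
preimage of `{f < R}` under `x ↦ x + n • v` lie in `{R² ≤ f²}`. As `n` shifts by `v` move `D` by at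
most `nδ` in total variation, that set has probability at least `(1 - nδ)/2`, and Markov's
inequality bounds `E f²` from below.
Take `f = ∑_{c ∈ T} ς_c x_c` and `v = a ς` on a block `T` of `k` coordinates, with signs `ς` and
`a = ε k^{-1/p}`, so that `‖v‖_p = ε`. Averaging over all sign vectors kills the cross terms of
`f²` and gives `∑_{c ∈ T} E x_c² ≥ (n a k)² (1 - nδ) / 8`, which is at least
`ε² k^{2-2/p} (1 - δ) / (800 δ²)` for `n ≈ 1/(4δ)`. For `T` the `k = d - i` coordinates `σ j`,
`j ≥ i`, each term is at most `E x_{σ i}²`.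
-/

open MeasureTheory

/-- Total variation distance between two measures. -/
noncomputable def tv {α : Type*} [MeasurableSpace α] (P Q : Measure α) : ℝ :=
  ⨆ A : {s : Set α // MeasurableSet s}, |(P A.1).toReal - (Q A.1).toReal|

/-- The ℓ_p norm of a vector in ℝᵈ, for `p : ℝ≥0∞` (with `p = ∞` giving the sup norm). -/
noncomputable def lpNorm {d : ℕ} (p : ENNReal) (v : EuclideanSpace ℝ (Fin d)) : ℝ :=
  if p = ⊤ then ⨆ i, |v i| else (∑ i, |v i| ^ p.toReal) ^ (1 / p.toReal)

section TotalVariation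

variable {α : Type*} [MeasurableSpace α]

theorem abs_measureReal_sub_le_tv (P Q : Measure α) [IsFiniteMeasure P] [IsFiniteMeasure Q]
    {A : Set α} (hA : MeasurableSet A) : |P.real A - Q.real A| ≤ tv P Q := by
  have hbdd : BddAbove (Set.range fun B : {s : Set α // MeasurableSet s} =>
      |P.real B.1 - Q.real B.1|) := by
    refine ⟨P.real Set.univ + Q.real Set.univ, ?_⟩
    rintro _ ⟨B, rfl⟩
    have hP : P.real B.1 ≤ P.real Set.univ := measureReal_mono (Set.subset_univ _)
    have hQ : Q.real B.1 ≤ Q.real Set.univ := measureReal_mono (Set.subset_univ _)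
    have hP₀ : 0 ≤ P.real Set.univ := measureReal_nonneg
    have hQ₀ : 0 ≤ Q.real Set.univ := measureReal_nonneg
    exact abs_sub_le_of_nonneg_of_le measureReal_nonneg (by linarith) measureReal_nonneg
      (by linarith)
  exact le_ciSup hbdd (⟨A, hA⟩ : {s : Set α // MeasurableSet s})

variable {G : Type*} [AddMonoid G] [MeasurableSpace G] [MeasurableAdd G]

theorem measureReal_le_preimage_add_nsmul {μ : Measure G} [IsFiniteMeasure μ] {v : G} {δ : ℝ}
    (hv : tv μ (μ.map (· + v)) ≤ δ) (n : ℕ) {B : Set G} (hB : MeasurableSet B) :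
    μ.real B ≤ μ.real ((· + n • v) ⁻¹' B) + n * δ := by
  induction n generalizing B with
  | zero => simp
  | succ n ih =>
    have hshift : μ.real B ≤ μ.real ((· + v) ⁻¹' B) + δ := by
      have h := (le_abs_self _).trans ((abs_measureReal_sub_le_tv μ _ hB).trans hv)
      rw [map_measureReal_apply (measurable_add_const v) hB] at h
      linarith
    have hpre : (· + n • v) ⁻¹' ((· + v) ⁻¹' B) = (· + (n + 1) • v) ⁻¹' B := by
      ext x
      simp only [Set.mem_preimage, succ_nsmul, add_assoc]
    have := ih (measurable_add_const v hB)
    rw [hpre] at this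
    push_cast
    linarith

theorem ofReal_mul_le_lintegral_sq_of_tv_map_add_le {μ : Measure G} [IsProbabilityMeasure μ] {v : G}
    {δ s : ℝ} (hv : tv μ (μ.map (· + v)) ≤ δ) {f : G → ℝ} (hf : Measurable f)
    (hfv : ∀ x, f (x + v) = f x + s) (hs : 0 ≤ s) (n : ℕ) :
    ENNReal.ofReal ((n * s / 2) ^ 2 * ((1 - n * δ) / 2)) ≤ ∫⁻ x, ENNReal.ofReal (f x ^ 2) ∂μ := by
  have hfn : ∀ x, f (x + n • v) = f x + n * s := by
    intro x
    induction n generalizing x with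
    | zero => simp
    | succ n ih =>
      rw [succ_nsmul, ← add_assoc, hfv, ih]
      push_cast
      ring
  set R := n * s / 2 with hR_def
  have hR : 0 ≤ R := by positivity
  set F := {x | R ^ 2 ≤ f x ^ 2}
  have hB : MeasurableSet {x | f x < R} := measurableSet_lt hf measurable_const
  have hpre : (· + n • v) ⁻¹' {x | f x < R} ⊆ F := by
    intro x hx
    simp only [Set.mem_preimage, Set.mem_ofPred_eq, hfn] at hx
    have hlt : f x < -R := by linarith
    show R ^ 2 ≤ f x ^ 2
    nlinarith
  have hcompl : {x | f x < R}ᶜ ⊆ F := by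
    intro x hx
    simp only [Set.mem_compl_iff, Set.mem_ofPred_eq, not_lt] at hx
    show R ^ 2 ≤ f x ^ 2
    nlinarith
  have hF : (1 - n * δ) / 2 ≤ μ.real F := by
    have h1 := measureReal_le_preimage_add_nsmul hv n hB
    have h2 := measureReal_mono (μ := μ) hpre
    have h3 := measureReal_mono (μ := μ) hcompl
    have h4 := probReal_add_probReal_compl (μ := μ) hB
    linarith
  have hmarkov := mul_meas_ge_le_lintegral₀ (μ := μ) (hf.pow_const 2).ennreal_ofReal.aemeasurable
    (ENNReal.ofReal (R ^ 2))
  calc ENNReal.ofReal (R ^ 2 * ((1 - n * δ) / 2))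
      ≤ ENNReal.ofReal (R ^ 2) * μ F := by
        rw [ENNReal.ofReal_mul (sq_nonneg R), ← ofReal_measureReal]
        gcongr
    _ ≤ ∫⁻ x, ENNReal.ofReal (f x ^ 2) ∂μ :=
        le_trans (by gcongr; exact fun x hx => ENNReal.ofReal_le_ofReal hx) hmarkov

end TotalVariation

section SignVectors

open Finset

variable {ι : Type*} [DecidableEq ι]

def signVector (T : Finset ι) (a : ℝ) (ς : ι → ℤˣ) : EuclideanSpace ℝ ι :=
  WithLp.toLp 2 fun c => if c ∈ T then a * (ς c : ℤ) else 0

theorem sum_sign_mul_add_signVector (T : Finset ι) (a : ℝ) (ς : ι → ℤˣ)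
    (x : EuclideanSpace ℝ ι) :
    ∑ c ∈ T, ((ς c : ℤ) : ℝ) * (x + signVector T a ς) c =
      ∑ c ∈ T, ((ς c : ℤ) : ℝ) * x c + a * #T := by
  have hsq (c : ι) : ((ς c : ℤ) : ℝ) * (ς c : ℤ) = 1 := by
    rw [← Int.cast_mul, ← Units.val_mul, Int.units_mul_self, Units.val_one, Int.cast_one]
  have hterm : ∀ c ∈ T, ((ς c : ℤ) : ℝ) * (x + signVector T a ς) c = (ς c : ℤ) * x c + a := by
    intro c hc
    simp only [signVector, PiLp.add_apply, if_pos hc]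
    linear_combination a * hsq c
  rw [sum_congr rfl hterm, sum_add_distrib, sum_const, nsmul_eq_mul, mul_comm]

variable [Fintype ι]

theorem sum_sign_mul_sign (c c' : ι) :
    ∑ ς : ι → ℤˣ, ((ς c : ℤ) : ℝ) * (ς c' : ℤ) =
      if c = c' then (Fintype.card (ι → ℤˣ) : ℝ) else 0 := by
  split_ifs with h
  · subst h
    simp [← Int.cast_mul, ← Units.val_mul, Int.units_mul_self]
  · -- flipping the sign of coordinate `c` negates every summand
    have hflip := Equiv.sum_comp (Equiv.mulLeft (Pi.mulSingle c (-1) : ι → ℤˣ))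
      fun ς : ι → ℤˣ => ((ς c : ℤ) : ℝ) * (ς c' : ℤ)
    simp only [Equiv.coe_mulLeft, Pi.mul_apply, Pi.mulSingle_eq_same,
      Pi.mulSingle_eq_of_ne (Ne.symm h), one_mul, Units.val_neg,
      Int.cast_neg, neg_mul, Finset.sum_neg_distrib] at hflip
    linarith

theorem sum_sq_sum_sign_mul (s : Finset ι) (a : ι → ℝ) :
    ∑ ς : ι → ℤˣ, (∑ c ∈ s, ((ς c : ℤ) : ℝ) * a c) ^ 2 =
      Fintype.card (ι → ℤˣ) * ∑ c ∈ s, a c ^ 2 := by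
  calc ∑ ς : ι → ℤˣ, (∑ c ∈ s, ((ς c : ℤ) : ℝ) * a c) ^ 2
      = ∑ ς : ι → ℤˣ, ∑ c ∈ s, ∑ c' ∈ s, a c * a c' * (((ς c : ℤ) : ℝ) * (ς c' : ℤ)) := by
        refine sum_congr rfl fun ς _ => ?_
        rw [sq, sum_mul_sum]
        exact sum_congr rfl fun _ _ => sum_congr rfl fun _ _ => by ring
    _ = ∑ c ∈ s, ∑ c' ∈ s, a c * a c' * ∑ ς : ι → ℤˣ, ((ς c : ℤ) : ℝ) * (ς c' : ℤ) := by
        rw [sum_comm]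
        refine sum_congr rfl fun c _ => ?_
        rw [sum_comm]
        simp only [mul_sum]
    _ = Fintype.card (ι → ℤˣ) * ∑ c ∈ s, a c ^ 2 := by
        simp only [sum_sign_mul_sign, mul_ite, mul_zero, sum_ite_eq, mul_sum]
        exact sum_congr rfl fun c hc => by rw [if_pos hc]; ring

theorem sum_lintegral_sq_sum_sign_mul (D : Measure (EuclideanSpace ℝ ι)) (T : Finset ι) :
    ∑ ς : ι → ℤˣ, ∫⁻ x, ENNReal.ofReal ((∑ c ∈ T, ((ς c : ℤ) : ℝ) * x c) ^ 2) ∂D =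
      Fintype.card (ι → ℤˣ) * ∑ c ∈ T, ∫⁻ x, ENNReal.ofReal (x c ^ 2) ∂D := by
  rw [← lintegral_finsetSum _ fun _ _ => by fun_prop,
    ← lintegral_finsetSum _ fun _ _ => by fun_prop, ← lintegral_const_mul _ (by fun_prop)]
  refine lintegral_congr fun x => ?_
  rw [← ENNReal.ofReal_sum_of_nonneg fun _ _ => sq_nonneg _,
    ← ENNReal.ofReal_sum_of_nonneg fun _ _ => sq_nonneg _, sum_sq_sum_sign_mul,
    ENNReal.ofReal_mul (Nat.cast_nonneg _), ENNReal.ofReal_natCast]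

theorem ofReal_le_sum_lintegral_sq_of_tv_signVector_le (D : Measure (EuclideanSpace ℝ ι))
    [IsProbabilityMeasure D] (T : Finset ι) {a δ : ℝ} (ha : 0 ≤ a)
    (hTV : ∀ ς, tv D (D.map (· + signVector T a ς)) ≤ δ) (m : ℕ) :
    ENNReal.ofReal ((m * (a * #T) / 2) ^ 2 * ((1 - m * δ) / 2)) ≤
      ∑ c ∈ T, ∫⁻ x, ENNReal.ofReal (x c ^ 2) ∂D := by
  set N := Fintype.card (ι → ℤˣ)
  have hN : (N : ENNReal) ≠ 0 := by simp [N]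
  rw [← ENNReal.mul_le_mul_iff_right hN (ENNReal.natCast_ne_top N),
    ← sum_lintegral_sq_sum_sign_mul]
  calc (N : ENNReal) * ENNReal.ofReal ((m * (a * #T) / 2) ^ 2 * ((1 - m * δ) / 2))
      = ∑ _ς : ι → ℤˣ, ENNReal.ofReal ((m * (a * #T) / 2) ^ 2 * ((1 - m * δ) / 2)) := by
        rw [sum_const, card_univ, nsmul_eq_mul]
    _ ≤ _ := sum_le_sum fun ς _ =>
        ofReal_mul_le_lintegral_sq_of_tv_map_add_le (hTV ς) (by fun_prop)
          (sum_sign_mul_add_signVector T a ς) (by positivity) m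

end SignVectors

section LpBlock

open Finset

theorem lpNorm_signVector {d : ℕ} {p : ENNReal} (hp : p ≠ 0) {T : Finset (Fin d)} (hT : T.Nonempty)
    {a : ℝ} (ha : 0 ≤ a) (ς : Fin d → ℤˣ) :
    lpNorm p (signVector T a ς) = a * (#T : ℝ) ^ (1 / p.toReal) := by
  have habs (c : Fin d) : |signVector T a ς c| = if c ∈ T then a else 0 := by
    simp only [signVector, PiLp.toLp_apply]
    split_ifs
    · rw [abs_mul, abs_unit_intCast, mul_one, abs_of_nonneg ha]
    · exact abs_zero
  by_cases hpt : p = ⊤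
  · obtain ⟨c₀, hc₀⟩ := hT
    have : Nonempty (Fin d) := ⟨c₀⟩
    rw [_root_.lpNorm, if_pos hpt, hpt, ENNReal.toReal_top, div_zero, Real.rpow_zero, mul_one]
    refine le_antisymm (ciSup_le fun c => ?_) ?_
    · rw [habs]
      split_ifs <;> simp [ha]
    · simpa [habs, hc₀] using le_ciSup (Finite.bddAbove_range fun c => |signVector T a ς c|) c₀
  · have hpos : 0 < p.toReal := ENNReal.toReal_pos hp hpt
    have hsum : ∑ c, |signVector T a ς c| ^ p.toReal = #T * a ^ p.toReal := by
      simp only [habs, apply_ite (· ^ p.toReal), Real.zero_rpow hpos.ne', sum_ite_mem,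
        univ_inter, sum_const, nsmul_eq_mul]
    rw [_root_.lpNorm, if_neg hpt, hsum, Real.mul_rpow (Nat.cast_nonneg _) (by positivity),
      one_div, Real.rpow_rpow_inv ha hpos.ne', mul_comm]

theorem exists_nat_sq_mul_one_sub_mul_ge {δ : ℝ} (hδ0 : 0 < δ) (hδ1 : δ ≤ 1) :
    ∃ m : ℕ, (1 - δ) / (100 * δ ^ 2) ≤ m ^ 2 * (1 - m * δ) := by
  rcases le_or_gt δ (1 / 4) with hδ | hδ
  · -- `m = ⌈1 / (4δ)⌉` makes `mδ ∈ [1/4, 1/2)`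
    refine ⟨⌈1 / (4 * δ)⌉₊, ?_⟩
    set m : ℝ := ((⌈1 / (4 * δ)⌉₊ : ℕ) : ℝ)
    have hlo : 1 / 4 ≤ m * δ := by
      have := Nat.le_ceil (1 / (4 * δ))
      rw [div_le_iff₀ (by positivity)] at this
      linarith
    have hhi : m * δ < 1 / 4 + δ := by
      have := Nat.ceil_lt_add_one (by positivity : (0 : ℝ) ≤ 1 / (4 * δ))
      rw [← lt_div_iff₀ hδ0]
      calc m < 1 / (4 * δ) + 1 := this
        _ = (1 / 4 + δ) / δ := by field_simp
    rw [div_le_iff₀ (by positivity)]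
    nlinarith [mul_le_mul hlo hlo (by norm_num) (by positivity)]
  · refine ⟨1, ?_⟩
    rw [div_le_iff₀ (by positivity), Nat.cast_one, one_pow, one_mul, one_mul]
    nlinarith [mul_nonneg (sub_nonneg.2 hδ1) (show 0 ≤ 100 * δ ^ 2 - 1 by nlinarith)]

theorem ofReal_le_sum_lintegral_sq_of_tv_le {d : ℕ} {p : ENNReal} (hp : p ≠ 0)
    (D : Measure (EuclideanSpace ℝ (Fin d))) [IsProbabilityMeasure D]
    {ε δ : ℝ} (hε : 0 < ε) (hδ0 : 0 < δ) (hδ1 : δ ≤ 1)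
    (hTV : ∀ v : EuclideanSpace ℝ (Fin d), lpNorm p v ≤ ε → tv D (D.map (· + v)) ≤ δ)
    {T : Finset (Fin d)} (hT : T.Nonempty) :
    ENNReal.ofReal (ε ^ 2 * (#T : ℝ) ^ (2 - 2 / p.toReal) / 800 * ((1 - δ) / δ ^ 2)) ≤
      ∑ c ∈ T, ∫⁻ x, ENNReal.ofReal (x c ^ 2) ∂D := by
  set k : ℝ := ((#T : ℕ) : ℝ)
  have hk : 0 < k := by simpa [k] using hT.card_pos
  -- the sign vectors `± a` on `T` lie on the `ℓ_p` sphere of radius `ε`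
  set a := ε / k ^ (1 / p.toReal)
  have ha : 0 ≤ a := by positivity
  have hak : (a * k) ^ 2 = ε ^ 2 * k ^ (2 - 2 / p.toReal) := by
    rw [div_mul_eq_mul_div, div_pow, mul_pow, ← Real.rpow_natCast, ← Real.rpow_natCast,
      ← Real.rpow_natCast (k ^ _), ← Real.rpow_mul hk.le, Real.rpow_sub hk]
    push_cast
    ring_nf
  obtain ⟨m, hm⟩ := exists_nat_sq_mul_one_sub_mul_ge hδ0 hδ1
  refine le_trans (ENNReal.ofReal_le_ofReal ?_)
    (ofReal_le_sum_lintegral_sq_of_tv_signVector_le D T ha (fun ς => hTV _ ?_) m)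
  · calc ε ^ 2 * k ^ (2 - 2 / p.toReal) / 800 * ((1 - δ) / δ ^ 2)
        = (a * k) ^ 2 / 8 * ((1 - δ) / (100 * δ ^ 2)) := by rw [hak]; field_simp; ring
      _ ≤ (a * k) ^ 2 / 8 * (m ^ 2 * (1 - m * δ)) := by gcongr
      _ = (m * (a * k) / 2) ^ 2 * ((1 - m * δ) / 2) := by ring
  · rw [lpNorm_signVector hp hT ha, div_mul_cancel₀ _ (by positivity)]

end LpBlock

theorem stmt11 {d : ℕ} (p : ENNReal) (hp : 2 ≤ p)
    (D : Measure (EuclideanSpace ℝ (Fin d))) [IsProbabilityMeasure D]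
    (ε δ : ℝ) (hε : 0 < ε) (hδ0 : 0 < δ) (hδ1 : δ ≤ 1)
    (hTV : ∀ v : EuclideanSpace ℝ (Fin d), lpNorm p v ≤ ε → tv D (D.map (· + v)) ≤ δ)
    (σ : Equiv.Perm (Fin d))
    (hmono : ∀ i j : Fin d, i ≤ j →
      (∫⁻ η, ENNReal.ofReal ((η (σ j)) ^ 2) ∂D) ≤ ∫⁻ η, ENNReal.ofReal ((η (σ i)) ^ 2) ∂D) :
    ∀ i : Fin d,
      ENNReal.ofReal (ε ^ 2 * ((d : ℝ) - (i : ℕ)) ^ (1 - 2 / p.toReal) / 800 *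
          ((1 - δ) / δ ^ 2)) ≤
        ∫⁻ η, ENNReal.ofReal ((η (σ i)) ^ 2) ∂D := by
  intro i
  -- `i` is 0-based: the paper's `d - i + 1` is `d - i` here
  set k := d - (i : ℕ)
  have hk : 0 < k := Nat.sub_pos_of_lt i.isLt
  have hblock := ofReal_le_sum_lintegral_sq_of_tv_le (ne_bot_of_le_ne_bot (by norm_num) hp) D
    hε hδ0 hδ1 hTV (T := (Finset.Ici i).map σ.toEmbedding) ⟨σ i, by simp⟩
  rw [Finset.card_map, Fin.card_Ici, Finset.sum_map] at hblock
  have hpeel := Finset.sum_le_card_nsmul _ _ _ fun j hj => hmono i j (Finset.mem_Ici.mp hj)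
  rw [Fin.card_Ici, nsmul_eq_mul] at hpeel
  rw [← Nat.cast_sub i.isLt.le, ← ENNReal.mul_le_mul_iff_right (by simpa using hk.ne')
    (ENNReal.natCast_ne_top k)]
  calc (k : ENNReal) *
        ENNReal.ofReal (ε ^ 2 * (k : ℝ) ^ (1 - 2 / p.toReal) / 800 * ((1 - δ) / δ ^ 2))
      = ENNReal.ofReal (k * (ε ^ 2 * (k : ℝ) ^ (1 - 2 / p.toReal) / 800 * ((1 - δ) / δ ^ 2))) := by
        rw [ENNReal.ofReal_mul (Nat.cast_nonneg k), ENNReal.ofReal_natCast]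
    _ = ENNReal.ofReal (ε ^ 2 * (k : ℝ) ^ (2 - 2 / p.toReal) / 800 * ((1 - δ) / δ ^ 2)) := by
        rw [show (2 : ℝ) - 2 / p.toReal = 1 + (1 - 2 / p.toReal) by ring,
          Real.rpow_add (by positivity), Real.rpow_one]
        ring_nf
    _ ≤ _ := hblock
    _ ≤ _ := hpeel
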